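/- Let g_R be a Lie algebroid over a local k-algebra R such that R is g_R-simple, and let 0 → M_1 → M → M_2 → 0 be an exact sequence of g_R-modules that are of finite type over R. Then M is a local system over g_R if and only if both M_1 and M_2 are local systems over g_R. -/

import Mathlib

/-!
Both lengths are additive along the sequence. A chain of submodules of `M` is separated by its
preimages in `M₁` and its images in `M₂`, and chains in `M₁` and `M₂` concatenate through
`f(M₁)`. For the fibre lengths (submodules containing `𝔪M`) the concatenation needs
`f(M₁) ∩ 𝔪M = f(𝔪M₁)`, which holds because the sequence splits.

It splits because over a `g_R`-simple base every finite `g_R`-module is free: for a minimal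
system of generators, the ideal generated by the coefficients of all relations is
`g_R`-invariant (differentiate a relation) and lies in `𝔪`, hence is zero. The same argument
shows that `N ↦ N + 𝔪M` is strictly monotone on `g_R`-submodules, so `ℓ_{g_R} ≤ ℓ_{g_k}` for
every module; as fibre lengths are finite, equality for `M` forces equality for `M₁` and `M₂`.
-/

open IsLocalRing

universe u v w

/-- A Lie algebroid over `R/k`. -/
structure LieAlgebroid (k : Type u) (A : Type v) (g : Type w) [CommRing k] [CommRing A]
    [Algebra k A] [LieRing g] [LieAlgebra k g] [Module A g] [IsScalarTower k A g] where
  anchor : g →ₗ[A] Derivation k A A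
  anchor_bracket : ∀ x y : g, anchor ⁅x, y⁆ = ⁅anchor x, anchor y⁆
  leibniz : ∀ (x y : g) (r : A), ⁅x, r • y⁆ = anchor x r • y + r • ⁅x, y⁆

namespace LieAlgebroid

variable {k : Type u} {A : Type v} {g : Type w} [CommRing k] [CommRing A]
    [Algebra k A] [LieRing g] [LieAlgebra k g] [Module A g] [IsScalarTower k A g]

/-- A `g`-invariant ideal. -/
def InvariantIdeal (L : LieAlgebroid k A g) (I : Ideal A) : Prop :=
  ∀ x : g, ∀ a ∈ I, L.anchor x a ∈ I

/-- The base ring is simple over the Lie algebroid. -/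
def IsSimpleBase (L : LieAlgebroid k A g) : Prop :=
  ∀ I : Ideal A, L.InvariantIdeal I → I = ⊥ ∨ I = ⊤

/-- Modules over a Lie algebroid. -/
structure AlgebroidModule (L : LieAlgebroid k A g) (M : Type*) [AddCommGroup M]
    [Module A M] : Type _ where
  ρ : g → M → M
  ρ_add_left : ∀ x y m, ρ (x + y) m = ρ x m + ρ y m
  ρ_smul_left : ∀ (a : A) (x : g) (m : M), ρ (a • x) m = a • ρ x m
  ρ_add : ∀ x m m', ρ x (m + m') = ρ x m + ρ x m'
  ρ_bracket : ∀ x y m, ρ ⁅x, y⁆ m = ρ x (ρ y m) - ρ y (ρ x m)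
  ρ_leibniz : ∀ (x : g) (r : A) (m : M), ρ x (r • m) = L.anchor x r • m + r • ρ x m

variable {L : LieAlgebroid k A g} {M : Type*} [AddCommGroup M] [Module A M]

/-- A `g`-invariant `A`-submodule. -/
def AlgebroidModule.Invariant (σ : AlgebroidModule L M) (N : Submodule A M) : Prop :=
  ∀ x : g, ∀ m ∈ N, σ.ρ x m ∈ N

/-- The length `ℓ_{g_R}(M)` in the lattice of `g_R`-submodules. -/
noncomputable def AlgebroidModule.length (σ : AlgebroidModule L M) : WithBot ℕ∞ :=
  Order.krullDim {N : Submodule A M // σ.Invariant N}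

/-- The length `ℓ_{g_k}(k ⊗ M)` of the fibre of `M` over the fibre Lie algebra
`g_k = k ⊗ ker(anchor)`, computed via the lattice of submodules of `M` containing `m_A·M`
which are invariant under the kernel of the anchor. -/
noncomputable def AlgebroidModule.fibreLength [IsLocalRing A] (σ : AlgebroidModule L M) :
    WithBot ℕ∞ :=
  Order.krullDim {N : Submodule A M //
    (maximalIdeal A) • (⊤ : Submodule A M) ≤ N ∧
    ∀ x : g, L.anchor x = 0 → ∀ m ∈ N, σ.ρ x m ∈ N}

/-- `M` is a local system over `g_R`: `ℓ_{g_R}(M) = ℓ_{g_k}(k ⊗ M)`. -/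
def AlgebroidModule.IsLocalSystem [IsLocalRing A] (σ : AlgebroidModule L M) : Prop :=
  σ.length = σ.fibreLength

end LieAlgebroid

open Order Submodule

namespace Order

variable {α β γ : Type*}

lemma height_le_height_add_height [Preorder γ] [PartialOrder α] [Preorder β]
    {u : γ → α} {v : γ → β}
    (hu : Monotone u) (hv : Monotone v) (huv : ∀ ⦃x y⦄, x < y → u x = u y → v x < v y)
    (x : γ) : height x ≤ height (u x) + height (v x) := by
  suffices ∀ p : LTSeries γ, (p.length : ℕ∞) ≤ height (u p.last) + height (v p.last) from
    height_le fun p hp => hp ▸ this p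
  intro p
  induction p using RelSeries.inductionOn' with
  | singleton x => simp
  | snoc p y hy ih =>
    simp only [RelSeries.snoc_length, RelSeries.last_snoc, Nat.cast_add, Nat.cast_one]
    rcases (hu hy.le).lt_or_eq with hlt | heq
    · calc (p.length : ℕ∞) + 1 ≤ height (u p.last) + 1 + height (v p.last) := by
            rw [add_right_comm]; gcongr
        _ ≤ height (u y) + height (v y) :=
            add_le_add (height_add_one_le hlt) (height_mono (hv hy.le))
    · calc (p.length : ℕ∞) + 1 ≤ height (u p.last) + (height (v p.last) + 1) := by
            rw [← add_assoc]; gcongr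
        _ ≤ height (u y) + height (v y) :=
            add_le_add (heq ▸ le_rfl) (height_add_one_le (huv hy heq))

lemma krullDim_le_add_of_monotone [Preorder γ] [PartialOrder α] [Preorder β]
    {u : γ → α} {v : γ → β}
    (hu : Monotone u) (hv : Monotone v) (huv : ∀ ⦃x y⦄, x < y → u x = u y → v x < v y) :
    krullDim γ ≤ krullDim α + krullDim β := by
  rw [krullDim_eq_iSup_height (α := γ)]
  refine iSup_le fun x => ?_
  calc ((height x : ℕ∞) : WithBot ℕ∞) ≤ ((height (u x) + height (v x) : ℕ∞) : WithBot ℕ∞) :=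
        WithBot.coe_le_coe.2 (height_le_height_add_height hu hv huv x)
    _ ≤ krullDim α + krullDim β := by
        rw [WithBot.coe_add]
        exact add_le_add (height_le_krullDim _) (height_le_krullDim _)

lemma add_krullDim_le_of_strictMono [Preorder γ] [Preorder α] [Preorder β]
    {sα : α → γ} {sβ : β → γ} (hα : StrictMono sα) (hβ : StrictMono sβ) (c : γ)
    (hαc : ∀ a, sα a ≤ c) (hβc : ∀ b, c ≤ sβ b) :
    krullDim α + krullDim β ≤ krullDim γ := by
  have : Nonempty γ := ⟨c⟩
  calc krullDim α + krullDim β ≤ krullDim (Set.Iic c) + krullDim (Set.Ici c) :=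
        add_le_add (krullDim_le_of_strictMono (fun a => ⟨sα a, hαc a⟩) fun _ _ h => hα h)
          (krullDim_le_of_strictMono (fun b => ⟨sβ b, hβc b⟩) fun _ _ h => hβ h)
    _ = ((height c + coheight c : ℕ∞) : WithBot ℕ∞) := by
        rw [← height_eq_krullDim_Iic, ← coheight_eq_krullDim_Ici, WithBot.coe_add]
    _ ≤ krullDim γ := by
        rw [krullDim_eq_iSup_height_add_coheight_of_nonempty]
        exact WithBot.coe_le_coe.2 (le_iSup (fun x : γ => height x + coheight x) c)

end Order

lemma WithBot.eq_and_eq_of_add_eq_add {a₁ a₂ b₁ b₂ : WithBot ℕ∞} (h : a₁ + a₂ = b₁ + b₂)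
    (h₁ : a₁ ≤ b₁) (h₂ : a₂ ≤ b₂) (ha₁ : a₁ ≠ ⊥) (ha₂ : a₂ ≠ ⊥) (hb₁ : b₁ ≠ ⊤) (hb₂ : b₂ ≠ ⊤) :
    a₁ = b₁ ∧ a₂ = b₂ := by
  lift a₁ to ℕ∞ using ha₁
  lift a₂ to ℕ∞ using ha₂
  lift b₁ to ℕ∞ using ne_bot_of_le_ne_bot WithBot.coe_ne_bot h₁
  lift b₂ to ℕ∞ using ne_bot_of_le_ne_bot WithBot.coe_ne_bot h₂
  lift b₁ to ℕ using by simpa using hb₁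
  lift b₂ to ℕ using by simpa using hb₂
  lift a₁ to ℕ using ne_top_of_le_ne_top (ENat.natCast_ne_top b₁) (by exact_mod_cast h₁)
  lift a₂ to ℕ using ne_top_of_le_ne_top (ENat.natCast_ne_top b₂) (by exact_mod_cast h₂)
  norm_cast at h h₁ h₂ ⊢
  omega

namespace Submodule

variable {R M M₁ M₂ : Type*} [CommRing R] [AddCommGroup M] [Module R M] [AddCommGroup M₁]
  [Module R M₁] [AddCommGroup M₂] [Module R M₂]

lemma eq_of_le_of_comap_eq_of_map_eq {f : M₁ →ₗ[R] M} {p : M →ₗ[R] M₂}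
    (hfp : LinearMap.range f = LinearMap.ker p) {X Y : Submodule R M} (hXY : X ≤ Y)
    (hf : X.comap f = Y.comap f) (hp : X.map p = Y.map p) : X = Y := by
  refine eq_of_le_of_inf_le_of_sup_le (z := LinearMap.range f) hXY ?_ ?_
  · rw [inf_comm, ← map_comap_eq, ← hf, map_comap_eq, inf_comm]
  · rw [hfp, ← comap_map_eq, ← hp, comap_map_eq]

lemma comap_map_sup_smul_top {f : M₁ →ₗ[R] M} {r : M →ₗ[R] M₁} (hr : r ∘ₗ f = LinearMap.id)
    {I : Ideal R} {N : Submodule R M₁} (hN : I • ⊤ ≤ N) : (N.map f ⊔ I • ⊤).comap f = N := by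
  refine le_antisymm (fun x hx => ?_) ((le_comap_map f N).trans (comap_mono le_sup_left))
  have hrx : r (f x) ∈ (N.map f ⊔ I • ⊤).map r := mem_map_of_mem hx
  rw [map_sup, ← map_comp, hr, map_id, map_smul'', map_top] at hrx
  rw [← LinearMap.id_apply (R := R) x, ← hr]
  exact sup_le le_rfl ((smul_mono_right I le_top).trans hN) hrx

end Submodule

namespace LieAlgebroid

variable {k A g : Type*} [CommRing k] [CommRing A] [Algebra k A] [LieRing g] [LieAlgebra k g]
  [Module A g] [IsScalarTower k A g] {L : LieAlgebroid k A g}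

lemma invariantIdeal_span {T : Set A} (hT : ∀ x : g, ∀ a ∈ T, L.anchor x a ∈ Ideal.span T) :
    L.InvariantIdeal (Ideal.span T) := by
  intro x a ha
  induction ha using Submodule.span_induction with
  | mem a ha => exact hT x a ha
  | zero => simp
  | add a b _ _ ha hb => rw [map_add]; exact add_mem ha hb
  | smul r a ha ih =>
    rw [smul_eq_mul, Derivation.leibniz, smul_eq_mul, smul_eq_mul]
    exact add_mem (Ideal.mul_mem_left _ r ih) (Ideal.mul_mem_right _ _ ha)

namespace AlgebroidModule

section Stability

variable {M M' : Type*} [AddCommGroup M] [Module A M] [AddCommGroup M'] [Module A M']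
  (σ : AlgebroidModule L M) (σ' : AlgebroidModule L M')

lemma ρ_zero (x : g) : σ.ρ x 0 = 0 := by
  simpa using (σ.ρ_add x 0 0).symm

lemma ρ_sum (x : g) {ι : Type*} (t : Finset ι) (m : ι → M) :
    σ.ρ x (∑ i ∈ t, m i) = ∑ i ∈ t, σ.ρ x (m i) :=
  map_sum (AddMonoidHom.mk' (σ.ρ x) (σ.ρ_add x)) m t

def StableUnder (s : Set g) (N : Submodule A M) : Prop :=
  ∀ x ∈ s, ∀ m ∈ N, σ.ρ x m ∈ N

variable {σ σ'} {s : Set g}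

lemma stableUnder_bot : σ.StableUnder s ⊥ := by
  rintro x - m rfl
  exact σ.ρ_zero x

lemma Invariant.stableUnder {N : Submodule A M} (hN : σ.Invariant N) : σ.StableUnder s N :=
  fun x _ => hN x

lemma invariant_bot : σ.Invariant ⊥ :=
  fun x => stableUnder_bot x (Set.mem_univ x)

lemma length_ne_bot : σ.length ≠ ⊥ :=
  krullDim_ne_bot_iff.2 ⟨⟨⊥, σ.invariant_bot⟩⟩

lemma StableUnder.sup {N N' : Submodule A M} (hN : σ.StableUnder s N)
    (hN' : σ.StableUnder s N') : σ.StableUnder s (N ⊔ N') := by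
  intro x hx m hm
  obtain ⟨a, ha, b, hb, rfl⟩ := mem_sup.1 hm
  rw [σ.ρ_add]
  exact add_mem_sup (hN x hx a ha) (hN' x hx b hb)

lemma StableUnder.map {φ : M →ₗ[A] M'} (hφ : ∀ x m, φ (σ.ρ x m) = σ'.ρ x (φ m))
    {N : Submodule A M} (hN : σ.StableUnder s N) : σ'.StableUnder s (N.map φ) := by
  rintro x hx _ ⟨m, hm, rfl⟩
  exact ⟨σ.ρ x m, hN x hx m hm, hφ x m⟩

lemma StableUnder.comap {φ : M →ₗ[A] M'} (hφ : ∀ x m, φ (σ.ρ x m) = σ'.ρ x (φ m))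
    {N : Submodule A M'} (hN : σ'.StableUnder s N) : σ.StableUnder s (N.comap φ) := by
  intro x hx m hm
  rw [mem_comap, hφ]
  exact hN x hx _ hm

lemma stableUnder_smul_top (hs : ∀ x ∈ s, L.anchor x = 0) (I : Ideal A) :
    σ.StableUnder s (I • ⊤) := by
  intro x hx m hm
  refine smul_induction_on hm (fun r hr m _ => ?_) (fun m m' hm hm' => ?_)
  · rw [σ.ρ_leibniz, hs x hx, Derivation.zero_apply, zero_smul, zero_add]
    exact smul_mem_smul hr mem_top
  · rw [σ.ρ_add]
    exact add_mem hm hm'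

variable (σ) in
def stableSubmodules (I : Ideal A) (s : Set g) : Set (Submodule A M) :=
  {N | I • ⊤ ≤ N ∧ σ.StableUnder s N}

lemma length_eq_krullDim_stableSubmodules :
    σ.length = krullDim (σ.stableSubmodules ⊥ Set.univ) :=
  krullDim_eq_of_orderIso (OrderIso.setCongr _ _ (by
    ext N; simp [stableSubmodules, StableUnder]; rfl))

lemma fibreLength_eq_krullDim_stableSubmodules [IsLocalRing A] :
    σ.fibreLength = krullDim (σ.stableSubmodules (maximalIdeal A) {x | L.anchor x = 0}) :=
  rfl

variable {I : Ideal A}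

lemma comap_mem_stableSubmodules {φ : M →ₗ[A] M'} (hφ : ∀ x m, φ (σ.ρ x m) = σ'.ρ x (φ m))
    {N : Submodule A M'} (hN : N ∈ σ'.stableSubmodules I s) :
    N.comap φ ∈ σ.stableSubmodules I s := by
  refine ⟨map_le_iff_le_comap.1 ?_, hN.2.comap hφ⟩
  rw [map_smul'', Submodule.map_top]
  exact (smul_mono_right I le_top).trans hN.1

lemma map_mem_stableSubmodules {φ : M →ₗ[A] M'} (hφ : ∀ x m, φ (σ.ρ x m) = σ'.ρ x (φ m))
    (hsurj : Function.Surjective φ) {N : Submodule A M} (hN : N ∈ σ.stableSubmodules I s) :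
    N.map φ ∈ σ'.stableSubmodules I s := by
  refine ⟨?_, hN.2.map hφ⟩
  rw [← LinearMap.range_eq_top.2 hsurj, LinearMap.range_eq_map, ← map_smul'']
  exact map_mono hN.1

end Stability

section ExactSequence

variable {M₁ M M₂ : Type*} [AddCommGroup M₁] [Module A M₁] [AddCommGroup M] [Module A M]
  [AddCommGroup M₂] [Module A M₂]
  {σ₁ : AlgebroidModule L M₁} {σ : AlgebroidModule L M} {σ₂ : AlgebroidModule L M₂}

theorem krullDim_stableSubmodules_eq_add {f : M₁ →ₗ[A] M} {p : M →ₗ[A] M₂} {r : M →ₗ[A] M₁}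
    (hf : ∀ x m, f (σ₁.ρ x m) = σ.ρ x (f m)) (hp : ∀ x m, p (σ.ρ x m) = σ₂.ρ x (p m))
    (hr : r ∘ₗ f = LinearMap.id) (hsurj : Function.Surjective p)
    (hexact : LinearMap.range f = LinearMap.ker p) {I : Ideal A} {s : Set g}
    (hI : σ.StableUnder s (I • ⊤)) :
    krullDim (σ.stableSubmodules I s) =
      krullDim (σ₁.stableSubmodules I s) + krullDim (σ₂.stableSubmodules I s) := by
  have hpush : ∀ N₁ ∈ σ₁.stableSubmodules I s, N₁.map f ⊔ I • ⊤ ∈ σ.stableSubmodules I s :=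
    fun N₁ hN₁ => ⟨le_sup_right, (hN₁.2.map hf).sup hI⟩
  refine le_antisymm ?_ ?_
  · refine krullDim_le_add_of_monotone
      (u := fun N => (⟨N.1.comap f, comap_mem_stableSubmodules hf N.2⟩ :
        σ₁.stableSubmodules I s))
      (v := fun N => (⟨N.1.map p, map_mem_stableSubmodules hp hsurj N.2⟩ :
        σ₂.stableSubmodules I s))
      (fun _ _ h => comap_mono h) (fun _ _ h => map_mono h) fun X Y hXY hu => ?_
    refine lt_of_le_of_ne (map_mono hXY.le) fun hv => hXY.ne (Subtype.ext ?_)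
    exact eq_of_le_of_comap_eq_of_map_eq hexact hXY.le (congrArg Subtype.val hu)
      (congrArg Subtype.val hv)
  · refine add_krullDim_le_of_strictMono
      (sα := fun N₁ => (⟨N₁.1.map f ⊔ I • ⊤, hpush N₁.1 N₁.2⟩ : σ.stableSubmodules I s))
      (sβ := fun N₂ => (⟨N₂.1.comap p, comap_mem_stableSubmodules hp N₂.2⟩ :
        σ.stableSubmodules I s))
      ?_ ?_ ⟨_, hpush ⊤ ⟨le_top, fun _ _ _ _ => trivial⟩⟩ (fun N₁ => ?_) (fun N₂ => ?_)
    · refine Monotone.strictMono_of_injective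
        (fun _ _ h => Subtype.mk_le_mk.2 (sup_le_sup_right (map_mono h) _))
        fun N₁ N₁' h => Subtype.ext ?_
      rw [← comap_map_sup_smul_top hr N₁.2.1, ← comap_map_sup_smul_top hr N₁'.2.1]
      exact congrArg (comap f ∘ Subtype.val) h
    · exact Monotone.strictMono_of_injective (fun _ _ h => comap_mono h)
        fun _ _ h => Subtype.ext (comap_injective_of_surjective hsurj (congrArg Subtype.val h))
    · exact Subtype.mk_le_mk.2 (sup_le_sup_right (map_mono le_top) _)
    · refine Subtype.mk_le_mk.2 (sup_le ?_ ?_)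
      · rw [Submodule.map_top, hexact]
        exact fun m hm => by simp [mem_comap, LinearMap.mem_ker.1 hm]
      · rw [← map_le_iff_le_comap, map_smul'', Submodule.map_top]
        exact (smul_mono_right I le_top).trans N₂.2.1

end ExactSequence

end AlgebroidModule

end LieAlgebroid

section Generators

variable {A M : Type*} [CommRing A] [AddCommGroup M] [Module A M]

lemma IsLocalRing.exists_minimal_span_sup_eq_top [IsLocalRing A] [Module.Finite A M]
    (N : Submodule A M) :
    ∃ s : Finset M, span A (s : Set M) ⊔ N = ⊤ ∧
      ∀ x : s → A, ∑ i, x i • (i : M) ∈ N → ∀ i, x i ∈ maximalIdeal A := by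
  classical
  obtain ⟨s₀, hs₀⟩ := Module.Finite.fg_top (R := A) (M := M)
  obtain ⟨s, hs, hmin⟩ := WellFounded.has_min wellFounded_lt
    {s : Finset M | span A (s : Set M) ⊔ N = ⊤} ⟨s₀, by simp [hs₀]⟩
  refine ⟨s, hs, fun x hx i => by_contra fun hnm =>
    hmin (s.erase i) ?_ (Finset.erase_ssubset i.2)⟩
  -- a unit coefficient makes `i` redundant modulo `N`
  set S := span A (s.erase i : Set M) ⊔ N
  have hother : ∀ j : s, j ≠ i → (j : M) ∈ S := fun j hj =>
    mem_sup_left (subset_span (Finset.mem_erase.2 ⟨Subtype.coe_injective.ne hj, j.2⟩))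
  have hrest : ∑ j ∈ Finset.univ.erase i, x j • (j : M) ∈ S :=
    S.sum_mem fun j hj => S.smul_mem _ (hother j (Finset.ne_of_mem_erase hj))
  have hxi : x i • (i : M) ∈ S := by
    have := S.sub_mem (mem_sup_right hx : _ ∈ S) hrest
    rwa [← Finset.add_sum_erase _ _ (Finset.mem_univ i), add_sub_cancel_right] at this
  have hi : (i : M) ∈ S := (S.smul_mem_iff_of_isUnit (notMem_maximalIdeal.1 hnm)).1 hxi
  refine eq_top_iff.2 (hs ▸ sup_le (span_le.2 fun j hj => ?_) le_sup_right)
  rcases eq_or_ne (⟨j, hj⟩ : s) i with rfl | hji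
  · exact hi
  · exact hother _ hji

variable {ι : Type*} [Fintype ι] {v : ι → M} {N N' : Submodule A M}

lemma exists_sub_sum_smul_mem (hv : span A (Set.range v) ⊔ N = ⊤) {I : Ideal A} {m : M}
    (hm : m ∈ I • (⊤ : Submodule A M)) :
    ∃ c : ι → A, (∀ i, c i ∈ I) ∧ m - ∑ i, c i • v i ∈ N := by
  rw [← hv, smul_sup] at hm
  have hm' : m ∈ I • span A (Set.range v) ⊔ N :=
    (sup_le_sup_left (smul_le_right : I • N ≤ N) _) hm
  obtain ⟨y, hy, z, hz, rfl⟩ := mem_sup.1 hm'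
  obtain ⟨c, hc, rfl⟩ := (mem_ideal_smul_span_iff_exists_sum I v y).1 hy
  exact ⟨c, hc, by simpa [Finsupp.sum_fintype] using hz⟩

variable (v) in
def coordinateIdeal (N : Submodule A M) : Ideal A :=
  Ideal.span {a | ∃ x : ι → A, ∑ i, x i • v i ∈ N ∧ a ∈ Set.range x}

lemma mem_coordinateIdeal {x : ι → A} (hx : ∑ i, x i • v i ∈ N) (i : ι) :
    x i ∈ coordinateIdeal v N :=
  Ideal.subset_span ⟨x, hx, i, rfl⟩

lemma coordinateIdeal_le_maximalIdeal [IsLocalRing A] (hv : span A (Set.range v) ⊔ N = ⊤)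
    (hmin : ∀ x : ι → A, ∑ i, x i • v i ∈ N → ∀ i, x i ∈ maximalIdeal A)
    (hN' : N' ≤ N ⊔ maximalIdeal A • ⊤) : coordinateIdeal v N' ≤ maximalIdeal A := by
  refine Ideal.span_le.2 ?_
  rintro _ ⟨x, hx, i, rfl⟩
  obtain ⟨n, hn, m, hm, hnm⟩ := mem_sup.1 (hN' hx)
  obtain ⟨y, hy, hyN⟩ := exists_sub_sum_smul_mem hv hm
  have hxy : ∑ j, (x - y) j • v j ∈ N := by
    have : ∑ j, (x - y) j • v j = n + (m - ∑ j, y j • v j) := by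
      simp only [Pi.sub_apply, sub_smul, Finset.sum_sub_distrib, ← hnm]
      abel
    exact this ▸ add_mem hn hyN
  simpa using add_mem (hmin _ hxy i) (hy i)

end Generators

namespace LieAlgebroid.AlgebroidModule

variable {k A g : Type*} [CommRing k] [CommRing A] [Algebra k A] [LieRing g] [LieAlgebra k g]
  [Module A g] [IsScalarTower k A g] {L : LieAlgebroid k A g}
  {M : Type*} [AddCommGroup M] [Module A M]

lemma invariantIdeal_coordinateIdeal (σ : AlgebroidModule L M) {ι : Type*} [Fintype ι]
    {v : ι → M} {N N' : Submodule A M} (hv : span A (Set.range v) ⊔ N = ⊤) (hNN' : N ≤ N')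
    (hN' : σ.Invariant N') : L.InvariantIdeal (coordinateIdeal v N') := by
  refine invariantIdeal_span ?_
  rintro δ _ ⟨x, hx, i, rfl⟩
  choose c _ hc using fun j => exists_sub_sum_smul_mem hv (I := ⊤)
    (by rw [top_smul]; exact mem_top : σ.ρ δ (v j) ∈ (⊤ : Ideal A) • (⊤ : Submodule A M))
  -- applying `ρ δ` to `∑ x j • v j` gives the coordinates `δ x + x c` modulo `N`
  set w : ι → A := fun i => L.anchor δ (x i) + ∑ j, x j * c j i
  have hw : ∑ i, w i • v i ∈ N' := by
    have : ∑ i, w i • v i =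
        σ.ρ δ (∑ j, x j • v j) - ∑ j, x j • (σ.ρ δ (v j) - ∑ i, c j i • v i) := by
      simp only [σ.ρ_sum, σ.ρ_leibniz, w, add_smul, Finset.sum_add_distrib, Finset.sum_smul,
        smul_sub, Finset.sum_sub_distrib, Finset.smul_sum, smul_smul]
      rw [Finset.sum_comm (f := fun i j => (x j * c j i) • v i)]
      abel
    exact this ▸ sub_mem (hN' δ _ hx) (hNN' (sum_mem fun j _ => smul_mem _ _ (hc j)))
  have : L.anchor δ (x i) = w i - ∑ j, x j * c j i := by simp [w]
  exact this ▸ sub_mem (mem_coordinateIdeal hw i)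
    (sum_mem fun j _ => Ideal.mul_mem_right _ _ (mem_coordinateIdeal hx j))

variable [IsLocalRing A]

theorem eq_zero_of_sum_smul_mem (σ : AlgebroidModule L M) (hsimple : L.IsSimpleBase)
    {ι : Type*} [Fintype ι] {v : ι → M} {N N' : Submodule A M} (hv : span A (Set.range v) ⊔ N = ⊤)
    (hmin : ∀ x : ι → A, ∑ i, x i • v i ∈ N → ∀ i, x i ∈ maximalIdeal A)
    (hNN' : N ≤ N') (hN' : σ.Invariant N') (hle : N' ≤ N ⊔ maximalIdeal A • ⊤)
    {x : ι → A} (hx : ∑ i, x i • v i ∈ N') : x = 0 := by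
  rcases hsimple _ (σ.invariantIdeal_coordinateIdeal hv hNN' hN') with hbot | htop
  · exact funext fun i => by simpa [hbot] using mem_coordinateIdeal hx i
  · exact absurd (top_le_iff.1 (htop ▸ coordinateIdeal_le_maximalIdeal hv hmin hle))
      (maximalIdeal.isMaximal A).ne_top

variable [Module.Finite A M]

theorem le_of_le_sup_smul_top (σ : AlgebroidModule L M) (hsimple : L.IsSimpleBase)
    {N N' : Submodule A M} (hNN' : N ≤ N') (hN' : σ.Invariant N')
    (hle : N' ≤ N ⊔ maximalIdeal A • ⊤) : N' ≤ N := by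
  obtain ⟨s, hs, hmin⟩ := exists_minimal_span_sup_eq_top N
  rw [← Subtype.range_coe (s := (s : Set M))] at hs
  intro m hm
  obtain ⟨c, -, hc⟩ := exists_sub_sum_smul_mem hs (I := ⊤) (by simp : m ∈ (⊤ : Ideal A) • ⊤)
  have hc' : ∑ i, c i • (i : M) ∈ N' := by
    simpa using sub_mem hm (hNN' hc)
  simpa [σ.eq_zero_of_sum_smul_mem hsimple hs hmin hNN' hN' hle hc'] using hc

theorem free (σ : AlgebroidModule L M) (hsimple : L.IsSimpleBase) : Module.Free A M := by
  obtain ⟨s, hs, hmin⟩ := exists_minimal_span_sup_eq_top (⊥ : Submodule A M)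
  rw [← Subtype.range_coe (s := (s : Set M))] at hs
  have hli : LinearIndependent A ((↑) : s → M) :=
    Fintype.linearIndependent_iff.2 fun c hc => congrFun
      (σ.eq_zero_of_sum_smul_mem hsimple hs hmin le_rfl σ.invariant_bot (by simp) (by simpa))
  exact .of_basis (Module.Basis.mk hli (by simpa using hs.ge))

theorem length_le_fibreLength (σ : AlgebroidModule L M) (hsimple : L.IsSimpleBase) :
    σ.length ≤ σ.fibreLength := by
  rw [fibreLength_eq_krullDim_stableSubmodules]
  refine krullDim_le_of_strictMono (fun N => (⟨N.1 ⊔ maximalIdeal A • ⊤, le_sup_right,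
    N.2.stableUnder.sup (stableUnder_smul_top (fun _ hx => hx) _)⟩ :
      σ.stableSubmodules (maximalIdeal A) {x | L.anchor x = 0})) fun N N' h => ?_
  refine lt_of_le_of_ne (Subtype.mk_le_mk.2 (sup_le_sup_right h.le _)) fun heq => h.ne ?_
  refine Subtype.ext (le_antisymm h.le (σ.le_of_le_sup_smul_top hsimple h.le N'.2 ?_))
  exact le_sup_left.trans (congrArg Subtype.val heq).ge

theorem fibreLength_ne_top (σ : AlgebroidModule L M) : σ.fibreLength ≠ ⊤ := by
  have hquot : Module.length A (M ⧸ (maximalIdeal A • ⊤ : Submodule A M)) ≠ ⊤ := by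
    let := Ideal.Quotient.field (maximalIdeal A)
    rw [Module.length_eq_of_surjective (R := A ⧸ maximalIdeal A) Ideal.Quotient.mk_surjective,
      Module.length_eq_finrank]
    exact ENat.natCast_ne_top _
  rw [Module.length_quotient, ← WithBot.coe_inj.ne, coheight_eq_krullDim_Ici] at hquot
  exact ne_top_of_le_ne_top hquot
    (krullDim_le_of_strictMono (fun N => (⟨N.1, N.2.1⟩ : Set.Ici _)) fun _ _ h => h)

end LieAlgebroid.AlgebroidModule

open LieAlgebroid AlgebroidModule

theorem localSystem_iff_of_exact_general
    (k : Type u) (R : Type v) (g : Type w) [Field k]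
    [CommRing R] [IsLocalRing R] [Algebra k R]
    [LieRing g] [LieAlgebra k g] [Module R g] [IsScalarTower k R g]
    (L : LieAlgebroid k R g) (hsimple : L.IsSimpleBase)
    (M₁ M M₂ : Type v) [AddCommGroup M₁] [Module R M₁] [Module.Finite R M₁]
    [AddCommGroup M] [Module R M]
    [AddCommGroup M₂] [Module R M₂] [Module.Finite R M₂]
    (σ₁ : AlgebroidModule L M₁) (σ : AlgebroidModule L M) (σ₂ : AlgebroidModule L M₂)
    (f : M₁ →ₗ[R] M) (p : M →ₗ[R] M₂)
    (hf : ∀ (x : g) (m : M₁), f (σ₁.ρ x m) = σ.ρ x (f m))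
    (hp : ∀ (x : g) (m : M), p (σ.ρ x m) = σ₂.ρ x (p m))
    (hinj : Function.Injective f) (hsurj : Function.Surjective p)
    (hexact : LinearMap.range f = LinearMap.ker p) :
    σ.IsLocalSystem ↔ (σ₁.IsLocalSystem ∧ σ₂.IsLocalSystem) := by
  have : Module.Free R M₂ := σ₂.free hsimple
  obtain ⟨r, hr⟩ : ∃ r : M →ₗ[R] M₁, r ∘ₗ f = LinearMap.id :=
    ((LinearMap.exact_iff.2 hexact.symm).split_tfae hinj hsurj).out 0 1 |>.1
      (Module.projective_lifting_property p LinearMap.id hsurj)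
  have hlength : σ.length = σ₁.length + σ₂.length := by
    simpa only [length_eq_krullDim_stableSubmodules] using
      krullDim_stableSubmodules_eq_add hf hp hr hsurj hexact
        (by rw [bot_smul]; exact stableUnder_bot)
  have hfibre : σ.fibreLength = σ₁.fibreLength + σ₂.fibreLength :=
    krullDim_stableSubmodules_eq_add hf hp hr hsurj hexact
      (stableUnder_smul_top (fun _ hx => hx) _)
  refine ⟨fun h => ?_, fun ⟨h₁, h₂⟩ => hlength.trans ((congrArg₂ (· + ·) h₁ h₂).trans hfibre.symm)⟩
  exact WithBot.eq_and_eq_of_add_eq_add (hlength.symm.trans (h.trans hfibre))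
    (σ₁.length_le_fibreLength hsimple) (σ₂.length_le_fibreLength hsimple) σ₁.length_ne_bot
    σ₂.length_ne_bot σ₁.fibreLength_ne_top σ₂.fibreLength_ne_top

/-- Let `g_R` be a Lie algebroid over a local `k`-algebra `R` with `R`
`g_R`-simple, and let `0 → M₁ → M → M₂ → 0` be an exact sequence of `g_R`-modules of finite
type over `R`.  Then `M` is a local system over `g_R` iff both `M₁` and `M₂` are. -/
theorem localSystem_iff_of_exact
    (k : Type u) (R : Type v) (g : Type w) [Field k] [CharZero k] [IsAlgClosed k]
    [CommRing R] [IsLocalRing R] [IsNoetherianRing R] [Algebra k R]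
    (hcoef : Function.Bijective (algebraMap k (ResidueField R)))
    [LieRing g] [LieAlgebra k g] [Module R g] [IsScalarTower k R g] [Module.Finite R g]
    (L : LieAlgebroid k R g) (hsimple : L.IsSimpleBase)
    (M₁ M M₂ : Type v) [AddCommGroup M₁] [Module R M₁] [Module.Finite R M₁]
    [AddCommGroup M] [Module R M] [Module.Finite R M]
    [AddCommGroup M₂] [Module R M₂] [Module.Finite R M₂]
    (σ₁ : AlgebroidModule L M₁) (σ : AlgebroidModule L M) (σ₂ : AlgebroidModule L M₂)
    (f : M₁ →ₗ[R] M) (p : M →ₗ[R] M₂)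
    (hf : ∀ (x : g) (m : M₁), f (σ₁.ρ x m) = σ.ρ x (f m))
    (hp : ∀ (x : g) (m : M), p (σ.ρ x m) = σ₂.ρ x (p m))
    (hinj : Function.Injective f) (hsurj : Function.Surjective p)
    (hexact : LinearMap.range f = LinearMap.ker p) :
    σ.IsLocalSystem ↔ (σ₁.IsLocalSystem ∧ σ₂.IsLocalSystem) :=
  localSystem_iff_of_exact_general k R g L hsimple M₁ M M₂ σ₁ σ σ₂ f p hf hp hinj hsurj hexact
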